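/- Let d = -2cos(π/r) with r ≥ 3, and let Δ_n satisfy Δ_0 = 1, Δ_1 = d, Δ_{n+1} = dΔ_n - Δ_{n-1}. Then each factor d + Δ_{j-1}/Δ_j is nonzero for 1 ≤ j ≤ r-2, and d - 1 ≠ 0; hence for 2 ≤ n ≤ r-1 the quantity P_n := (d + Δ_{n-2}/Δ_{n-1})(d + Δ_{n-3}/Δ_{n-2})⋯(d + Δ_1/Δ_2)(d-1) is nonzero. -/

import Mathlib

open Finset

/-- Let `d = -2cos(π/r)` with `r ≥ 3` and `Δ_0 = 1`, `Δ_1 = d`,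
`Δ_{n+1} = d·Δ_n - Δ_{n-1}` (so `Δ_n = sin((n+1)π/r)/sin(π/r)`, nonzero for
`n ≤ r-2`). Then each factor `d + Δ_{j-1}/Δ_j` (for `1 ≤ j ≤ r-2`) is nonzero,
`d - 1 ≠ 0`, and hence
`P_n = (∏_{j=2}^{n-1} (d + Δ_{j-1}/Δ_j))·(d-1) ≠ 0` for `2 ≤ n ≤ r-1`. -/
theorem projector_nonvanishing (r : ℕ) (hr : 3 ≤ r) (d : ℝ)
    (hd : d = -2 * Real.cos (Real.pi / r))
    (Δ : ℕ → ℝ) (h0 : Δ 0 = 1) (h1 : Δ 1 = d)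
    (hrec : ∀ n : ℕ, 1 ≤ n → Δ (n + 1) = d * Δ n - Δ (n - 1))
    (hne : ∀ n : ℕ, n ≤ r - 2 → Δ n ≠ 0) :
    (∀ j : ℕ, 1 ≤ j → j ≤ r - 2 → d + Δ (j - 1) / Δ j ≠ 0) ∧
    d - 1 ≠ 0 ∧
    (∀ n : ℕ, 2 ≤ n → n ≤ r - 1 →
      (∏ j ∈ Finset.Icc 2 (n - 1), (d + Δ (j - 1) / Δ j)) * (d - 1) ≠ 0) := by
  set θ : ℝ := Real.pi / r with hθ
  have hrpos : (0:ℝ) < r := by positivity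
  have hθpos : 0 < θ := div_pos Real.pi_pos hrpos
  have hθle : θ ≤ Real.pi / 3 := by
    apply div_le_div_of_nonneg_left Real.pi_pos.le (by norm_num)
    exact_mod_cast hr
  have hθlt : θ < Real.pi / 2 :=
    lt_of_le_of_lt hθle (by nlinarith [Real.pi_pos])
  have hs : 0 < Real.sin θ := Real.sin_pos_of_pos_of_lt_pi hθpos
    (lt_of_lt_of_le hθlt (by nlinarith [Real.pi_pos]))
  have hrθ : (r:ℝ) * θ = Real.pi := by
    rw [hθ]; field_simp
  -- closed form
  have key : ∀ n : ℕ, Δ n * Real.sin θ = (-1 : ℝ)^n * Real.sin (((n+1 : ℕ):ℝ) * θ) ∧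
      Δ (n+1) * Real.sin θ = (-1 : ℝ)^(n+1) * Real.sin (((n+2 : ℕ):ℝ) * θ) := by
    intro n
    induction n with
    | zero =>
      constructor
      · simp [h0]
      · rw [h1, hd]
        have e : ((((0:ℕ)+2 : ℕ)):ℝ) * θ = θ + θ := by push_cast; ring
        rw [e, Real.sin_add]
        ring
    | succ k ih =>
      refine ⟨ih.2, ?_⟩
      have hk1 : 1 ≤ k + 1 := Nat.le_add_left 1 k
      rw [hrec (k+1) hk1]
      have hsub : (k + 1) - 1 = k := rfl
      rw [hsub, sub_mul, mul_assoc, ih.1, ih.2, hd]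
      push_cast
      have e1 : ((k:ℝ)+1+2) * θ = (((k:ℝ)+1+1) * θ) + θ := by ring
      have e2 : ((k:ℝ)+1) * θ = (((k:ℝ)+1+1) * θ) - θ := by ring
      rw [e1, e2, Real.sin_add, Real.sin_sub]
      ring
  -- positivity of sin(m θ) for 1 ≤ m ≤ r-1, nonnegativity for m ≤ r
  have hsinpos : ∀ m : ℕ, 1 ≤ m → m ≤ r - 1 → 0 < Real.sin ((m:ℝ) * θ) := by
    intro m hm1 hm2
    apply Real.sin_pos_of_pos_of_lt_pi
    · have h1' : (1:ℝ) ≤ m := by exact_mod_cast hm1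
      nlinarith
    · have hmr : (m:ℝ) < r := by exact_mod_cast (by omega : m < r)
      calc (m:ℝ) * θ < r * θ := by nlinarith
        _ = Real.pi := hrθ
  have hsinnn : ∀ m : ℕ, m ≤ r → 0 ≤ Real.sin ((m:ℝ) * θ) := by
    intro m hm
    apply Real.sin_nonneg_of_nonneg_of_le_pi
    · positivity
    · have hmr : (m:ℝ) ≤ r := by exact_mod_cast hm
      calc (m:ℝ) * θ ≤ r * θ := by nlinarith
        _ = Real.pi := hrθ
  -- each factor is nonzero
  have hfac : ∀ j : ℕ, 1 ≤ j → j ≤ r - 2 → d + Δ (j - 1) / Δ j ≠ 0 := by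
    intro j hj1 hj2
    obtain ⟨k, rfl⟩ : ∃ k, j = k + 1 := ⟨j - 1, by omega⟩
    have hΔj : Δ (k+1) ≠ 0 := hne _ hj2
    have hnum : d * Δ (k+1) + Δ k ≠ 0 := by
      have hcalc : (d * Δ (k+1) + Δ k) * Real.sin θ =
          (-1 : ℝ)^k * (Real.sin (((k:ℝ)+3) * θ) + 2 * Real.sin (((k:ℝ)+1) * θ)) := by
        have h2 := (key k).2
        have h1' := (key k).1
        rw [add_mul, mul_assoc, h2, h1', hd]
        push_cast
        have e1 : ((k:ℝ)+3) * θ = (((k:ℝ)+2) * θ) + θ := by ring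
        have e2 : ((k:ℝ)+1) * θ = (((k:ℝ)+2) * θ) - θ := by ring
        rw [e1, e2, Real.sin_add, Real.sin_sub]
        ring
      have hpos1 : 0 < Real.sin (((k:ℝ)+1) * θ) := by
        have := hsinpos (k+1) (by omega) (by omega)
        push_cast at this; convert this using 3
      have hnn : 0 ≤ Real.sin (((k:ℝ)+3) * θ) := by
        have := hsinnn (k+3) (by omega)
        push_cast at this; convert this using 3
      intro h
      rw [h, zero_mul] at hcalc
      have hX : 0 < Real.sin (((k:ℝ)+3) * θ) + 2 * Real.sin (((k:ℝ)+1) * θ) := by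
        positivity
      have hpk : ((-1:ℝ)^k) ≠ 0 := pow_ne_zero _ (by norm_num)
      rcases mul_eq_zero.mp hcalc.symm with h' | h'
      · exact hpk h'
      · exact hX.ne' h' 
    have heq : d + Δ (k+1-1) / Δ (k+1) = (d * Δ (k+1) + Δ k) / Δ (k+1) := by
      rw [show k+1-1 = k from rfl]
      field_simp
    rw [heq]
    exact div_ne_zero hnum hΔj
  have hcos : 0 < Real.cos θ := Real.cos_pos_of_mem_Ioo ⟨by linarith [Real.pi_pos], hθlt⟩
  have hd1 : d - 1 ≠ 0 := by
    rw [hd]; intro h; nlinarith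
  refine ⟨hfac, hd1, ?_⟩
  intro n hn2 hnr
  refine mul_ne_zero ?_ hd1
  rw [Finset.prod_ne_zero_iff]
  intro j hj
  rw [Finset.mem_Icc] at hj
  exact hfac j (by omega) (by omega)
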